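/- Let L, M, N be pairwise non-proportional 2×2 Hermitian matrices that are linearly independent. For nonzero reals λ, μ, ν, the matrices M − λN, N − μL, and L − νM are linearly dependent over ℝ if and only if λμν = 1. -/

import Mathlib

/-!
In the basis `L, M, N` the three cevians have coefficient matrix
`!![0, 1, -λ; -μ, 0, 1; 1, -ν, 0]`, whose determinant is `1 - λμν`. Concretely, a relation
`a (M - λN) + b (N - μL) + c (L - νM) = 0` forces `c = μb`, `a = νc`, `b = λa`, hence
`b (1 - λμν) = 0`; and for `λμν = 1` the coefficients `(μν, 1, μ)` give a nontrivial relation.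
-/

section Triple

variable {R V : Type*} [CommRing R] [AddCommGroup V] [Module R V]

theorem LinearIndependent.triple_iff {x y z : V} :
    LinearIndependent R ![x, y, z] ↔
      ∀ a b c : R, a • x + b • y + c • z = 0 → a = 0 ∧ b = 0 ∧ c = 0 := by
  rw [Fintype.linearIndependent_iff]
  refine ⟨fun h a b c habc ↦ ?_, fun h g hg i ↦ ?_⟩
  · have := h ![a, b, c] (by simpa [Fin.sum_univ_three] using habc)
    exact ⟨this 0, this 1, this 2⟩
  · obtain ⟨h0, h1, h2⟩ := h (g 0) (g 1) (g 2) (by simpa [Fin.sum_univ_three] using hg)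
    fin_cases i <;> assumption

theorem cevians_combination (x y z : V) (lam mu nu a b c : R) :
    a • (y - lam • z) + b • (z - mu • x) + c • (x - nu • y) =
      (c - mu * b) • x + (a - nu * c) • y + (b - lam * a) • z := by
  module

variable [IsDomain R]

theorem LinearIndependent.cevians_iff {x y z : V} (h : LinearIndependent R ![x, y, z])
    (lam mu nu : R) :
    LinearIndependent R ![y - lam • z, z - mu • x, x - nu • y] ↔ lam * mu * nu ≠ 1 := by
  rw [LinearIndependent.triple_iff]
  constructor
  · intro hcev hprod
    have hrel : (mu * nu) • (y - lam • z) + (1 : R) • (z - mu • x) + mu • (x - nu • y) = 0 := by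
      linear_combination (norm := module) -(hprod • z)
    exact one_ne_zero (hcev _ _ _ hrel).2.1
  · intro hprod a b c habc
    rw [cevians_combination] at habc
    obtain ⟨hc, ha, hb⟩ := LinearIndependent.triple_iff.mp h _ _ _ habc
    have hb0 : b = 0 := by
      have : b * (1 - lam * mu * nu) = 0 := by linear_combination hb + lam * ha + lam * nu * hc
      exact (mul_eq_zero.mp this).resolve_right (sub_ne_zero.mpr (Ne.symm hprod))
    have hc0 : c = 0 := by linear_combination hc + mu * hb0
    exact ⟨by linear_combination ha + nu * hc0, hb0, hc0⟩

end Triple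

theorem ceva_matrices_general (L M N : Matrix (Fin 2) (Fin 2) ℂ)
    (hind : LinearIndependent ℝ ![L, M, N])
    (lam mu nu : ℝ) :
    ¬ LinearIndependent ℝ ![M - lam • N, N - mu • L, L - nu • M] ↔
      lam * mu * nu = 1 := by
  rw [hind.cevians_iff, not_not]

/-- Algebraic core of Ceva's theorem for Möbius triangles: for linearly
independent Hermitian matrices `L, M, N` and nonzero reals `λ, μ, ν`,
the cevian matrices `M − λN`, `N − μL`, `L − νM` are linearly dependent
over `ℝ` iff `λμν = 1`. -/
theorem ceva_matrices (L M N : Matrix (Fin 2) (Fin 2) ℂ)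
    (hL : L.IsHermitian) (hM : M.IsHermitian) (hN : N.IsHermitian)
    (hind : LinearIndependent ℝ ![L, M, N])
    (lam mu nu : ℝ) (hlam : lam ≠ 0) (hmu : mu ≠ 0) (hnu : nu ≠ 0) :
    ¬ LinearIndependent ℝ ![M - lam • N, N - mu • L, L - nu • M] ↔
      lam * mu * nu = 1 :=
  ceva_matrices_general L M N hind lam mu nu
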